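/- arXiv:2302.07757 — 2 statements merged into one kernel-verified Lean document; each statement's English description precedes it below -/
import Mathlib

section
/- For any graph G without isolated vertices, the zero forcing number satisfies Z(G) = |V(G)| − γ_gr^Z(G), where γ_gr^Z(G) is the Z-Grundy domination number of G. -/
open Finset

namespace ZFPaper

variable {V : Type*}

/-- Zero forcing propagation: `Forces G B v` means `v` eventually gets colored black
starting from the initially black set `B`. -/
inductive Forces (G : SimpleGraph V) (B : Set V) : V → Prop
  | init (v : V) : v ∈ B → Forces G B v
  | force (u v : V) : G.Adj u v → Forces G B u →
      (∀ w, G.Adj u w → w ≠ v → Forces G B w) → Forces G B v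

/-- `B` is a zero forcing set of `G`. -/
def IsZeroForcingSet (G : SimpleGraph V) (B : Set V) : Prop := ∀ v, Forces G B v

/-- The zero forcing number `Z(G)`. -/
noncomputable def zeroForcingNumber (G : SimpleGraph V) : ℕ :=
  sInf {m | ∃ B : Finset V, B.card = m ∧ IsZeroForcingSet G ↑B}

/-- The total zero forcing number `Z_t(G)`. -/
noncomputable def totalZeroForcingNumber (G : SimpleGraph V) : ℕ :=
  sInf {m | ∃ B : Finset V, B.card = m ∧ IsZeroForcingSet G ↑B ∧
    ∀ v ∈ B, ∃ u ∈ B, G.Adj v u}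

/-- The connected zero forcing number `Z_c(G)`. -/
noncomputable def connectedZeroForcingNumber (G : SimpleGraph V) : ℕ :=
  sInf {m | ∃ B : Finset V, B.card = m ∧ IsZeroForcingSet G ↑B ∧
    (G.induce (↑B : Set V)).Connected}

/-- The closed neighborhood of a vertex. -/
def closedNbhd (G : SimpleGraph V) (v : V) : Set V := G.neighborSet v ∪ {v}

/-- A Z-Grundy dominating sequence: each vertex has an open neighbor not yet dominated,
and at the end every vertex is dominated. -/
def IsZGrundySeq (G : SimpleGraph V) (l : List V) : Prop :=
  (∀ i : Fin l.length,
    ((G.neighborSet (l.get i)) \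
      (⋃ j : Fin l.length, ⋃ _ : (j : ℕ) < (i : ℕ), closedNbhd G (l.get j))).Nonempty) ∧
  ∀ v : V, ∃ i : Fin l.length, v ∈ closedNbhd G (l.get i)

/-- The Z-Grundy domination number `γ_gr^Z(G)`. -/
noncomputable def zGrundyNumber (G : SimpleGraph V) : ℕ :=
  sSup {m | ∃ l : List V, IsZGrundySeq G l ∧ l.length = m}

/-- The generalized Johnson graph `J_S(n,k)`. -/
def genJohnson (n k : ℕ) (S : Finset ℕ) :
    SimpleGraph {A : Finset (Fin n) // A.card = k} where
  Adj v w := v ≠ w ∧ (v.1 ∩ w.1).card ∈ S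
  symm := ⟨by
    rintro v w ⟨h1, h2⟩
    exact ⟨h1.symm, by rwa [Finset.inter_comm]⟩⟩
  loopless := ⟨by rintro v ⟨h1, -⟩; exact h1 rfl⟩

/-- The generalized Grassmann graph `J_{q,S}(n,k)` over a finite field `F` of order `q`. -/
def genGrassmann (F : Type*) [Field F] (n k : ℕ) (S : Finset ℕ) :
    SimpleGraph {W : Submodule F (Fin n → F) // Module.finrank F W = k} where
  Adj v w := v ≠ w ∧ Module.finrank F ↥(v.1 ⊓ w.1) ∈ S
  symm := ⟨by
    rintro v w ⟨h1, h2⟩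
    exact ⟨h1.symm, by rwa [inf_comm w.1 v.1]⟩⟩
  loopless := ⟨by rintro v ⟨h1, -⟩; exact h1 rfl⟩

/-- The Hamming graph `H(n,q)`. -/
def hammingGraph (n q : ℕ) : SimpleGraph (Fin n → Fin q) where
  Adj x y := hammingDist x y = 1
  symm := ⟨fun x y h => by rwa [hammingDist_comm]⟩
  loopless := ⟨fun x h => by simp only [hammingDist_self] at h; exact absurd h (by norm_num)⟩


section Aux

variable {V : Type} [Fintype V] (G : SimpleGraph V)

lemma mem_closedNbhd {v w : V} : w ∈ closedNbhd G v ↔ G.Adj v w ∨ w = v := by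
  simp [closedNbhd, or_comm]

/-- A "legal" sequence: each vertex footprints a new vertex via its open neighborhood. -/
def LegalSeq (l : List V) : Prop :=
  ∀ i (hi : i < l.length), ∃ x, G.Adj (l[i]'hi) x ∧
    ∀ j (hj : j < i), x ∉ closedNbhd G (l[j]'(hj.trans hi))

lemma isZGrundySeq_iff (l : List V) :
    IsZGrundySeq G l ↔ LegalSeq G l ∧
      ∀ v : V, ∃ (i : ℕ) (hi : i < l.length), v ∈ closedNbhd G (l[i]'hi) := by
  unfold IsZGrundySeq LegalSeq
  simp only [List.get_eq_getElem]
  constructor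
  · rintro ⟨h1, h2⟩
    constructor
    · intro i hi
      obtain ⟨x, hx⟩ := h1 ⟨i, hi⟩
      simp only [Set.mem_diff, Set.mem_iUnion, SimpleGraph.mem_neighborSet, not_exists] at hx
      exact ⟨x, hx.1, fun j hj => hx.2 ⟨j, hj.trans hi⟩ hj⟩
    · intro v
      obtain ⟨i, hi⟩ := h2 v
      exact ⟨i, i.isLt, hi⟩
  · rintro ⟨h1, h2⟩
    constructor
    · intro i
      obtain ⟨x, hx1, hx2⟩ := h1 i i.isLt
      refine ⟨x, ?_⟩
      simp only [Set.mem_diff, Set.mem_iUnion, SimpleGraph.mem_neighborSet, not_exists]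
      exact ⟨hx1, fun j hj => hx2 j hj⟩
    · intro v
      obtain ⟨i, hi, hv⟩ := h2 v
      exact ⟨⟨i, hi⟩, hv⟩

lemma legalSeq_length_le {l : List V} (hl : LegalSeq G l) : l.length ≤ Fintype.card V := by
  choose f hf1 hf2 using hl
  have hinj : Function.Injective (fun i : Fin l.length => f i i.isLt) := by
    intro i j hij
    simp only at hij
    by_contra hne
    have hne' : (i : ℕ) ≠ (j : ℕ) := fun h => hne (Fin.ext h)
    rcases hne'.lt_or_gt with hlt | hlt
    · exact hf2 j j.isLt i hlt (hij ▸ (mem_closedNbhd G).2 (Or.inl (hf1 i i.isLt)))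
    · exact hf2 i i.isLt j hlt (hij ▸ (mem_closedNbhd G).2 (Or.inl (hf1 j j.isLt)))
  simpa using Fintype.card_le_of_injective _ hinj

lemma legalSeq_append {l : List V} {w x : V} (hl : LegalSeq G l)
    (hx : G.Adj w x) (hxnot : ∀ i (hi : i < l.length), x ∉ closedNbhd G (l[i]'hi)) :
    LegalSeq G (l ++ [w]) := by
  intro i hi
  have hlen : (l ++ [w]).length = l.length + 1 := by simp
  by_cases hil : i < l.length
  · obtain ⟨y, hy1, hy2⟩ := hl i hil
    refine ⟨y, ?_, ?_⟩
    · rwa [List.getElem_append_left hil]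
    · intro j hj
      rw [List.getElem_append_left (hj.trans hil)]
      exact hy2 j hj
  · have hieq : i = l.length := by omega
    refine ⟨x, ?_, ?_⟩
    · have : (l ++ [w])[i]'hi = w := by
        subst hieq
        simp
      rw [this]; exact hx
    · intro j hj
      have hjl : j < l.length := by omega
      rw [List.getElem_append_left hjl]
      exact hxnot j hjl

lemma legalSeq_extend (h : ∀ v : V, ∃ w : V, G.Adj v w) (l : List V) (hl : LegalSeq G l) :
    ∃ m : List V, IsZGrundySeq G m ∧ l.length ≤ m.length := by
  classical
  suffices H : ∀ k (l : List V), LegalSeq G l →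
      (Finset.univ.filter fun v => ∀ i (hi : i < l.length), v ∉ closedNbhd G (l[i]'hi)).card ≤ k →
      ∃ m, IsZGrundySeq G m ∧ l.length ≤ m.length by
    exact H _ l hl le_rfl
  intro k
  induction k with
  | zero =>
    intro l hl hcard
    refine ⟨l, (isZGrundySeq_iff G l).2 ⟨hl, fun v => ?_⟩, le_rfl⟩
    by_contra hv
    push_neg at hv
    have hmem : v ∈ Finset.univ.filter fun v => ∀ i (hi : i < l.length),
        v ∉ closedNbhd G (l[i]'hi) := by
      simp only [Finset.mem_filter, Finset.mem_univ, true_and]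
      exact fun i hi => hv i hi
    have := Finset.card_pos.2 ⟨v, hmem⟩
    omega
  | succ k ih =>
    intro l hl hcard
    by_cases hdom : ∀ v : V, ∃ (i : ℕ) (hi : i < l.length), v ∈ closedNbhd G (l[i]'hi)
    · exact ⟨l, (isZGrundySeq_iff G l).2 ⟨hl, hdom⟩, le_rfl⟩
    · push_neg at hdom
      obtain ⟨v, hv⟩ := hdom
      obtain ⟨w, hw⟩ := h v
      have hl' : LegalSeq G (l ++ [w]) := legalSeq_append G hl hw.symm hv
      have hsub : (Finset.univ.filter fun x => ∀ i (hi : i < (l ++ [w]).length),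
          x ∉ closedNbhd G ((l ++ [w])[i]'hi)) ⊂
          (Finset.univ.filter fun x => ∀ i (hi : i < l.length), x ∉ closedNbhd G (l[i]'hi)) := by
        constructor
        · intro x hx
          simp only [Finset.mem_filter, Finset.mem_univ, true_and] at hx ⊢
          intro i hi
          have hi' : i < (l ++ [w]).length := by simp; omega
          have := hx i hi'
          rwa [List.getElem_append_left hi] at this
        · intro hsub'
          have hvold : v ∈ Finset.univ.filter fun x => ∀ i (hi : i < l.length),
              x ∉ closedNbhd G (l[i]'hi) := by
            simp only [Finset.mem_filter, Finset.mem_univ, true_and]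
            exact hv
          have hvnew := hsub' hvold
          simp only [Finset.mem_filter, Finset.mem_univ, true_and] at hvnew
          have hlw : l.length < (l ++ [w]).length := by simp
          apply hvnew l.length hlw
          have : (l ++ [w])[l.length]'hlw = w := by simp
          rw [this]
          exact (mem_closedNbhd G).2 (Or.inl hw.symm)
      have hcard' : (Finset.univ.filter fun x => ∀ i (hi : i < (l ++ [w]).length),
          x ∉ closedNbhd G ((l ++ [w])[i]'hi)).card ≤ k := by
        have := Finset.card_lt_card hsub
        omega
      obtain ⟨m, hm, hlen⟩ := ih (l ++ [w]) hl' hcard'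
      refine ⟨m, hm, ?_⟩
      have : l.length ≤ (l ++ [w]).length := by simp
      omega

end Aux
section Chain

variable {V : Type} [Fintype V] (G : SimpleGraph V)

lemma getElem_not_mem_take_of_nodup {l : List V} (hnd : l.Nodup) {i j : ℕ}
    (hi : i < l.length) (hij : j ≤ i) : l[i]'hi ∉ l.take j := by
  intro hmem
  obtain ⟨k, hk, hkeq⟩ := List.mem_iff_getElem.1 hmem
  have hk' : k < j := by
    have := hk
    simp only [List.length_take] at this
    omega
  have hkl : k < l.length := by omega
  have : (l.take j)[k]'hk = l[k]'hkl := List.getElem_take ..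
  rw [this] at hkeq
  have := (List.Nodup.getElem_inj_iff hnd).1 hkeq
  omega

lemma exists_chain (B : Finset V) (hB : IsZeroForcingSet G ↑B) :
    ∃ s : List V, s.Nodup ∧ (∀ v ∈ s, v ∉ B) ∧ (∀ v : V, v ∈ B ∨ v ∈ s) ∧
      ∀ (i : ℕ) (hi : i < s.length), ∃ u, (u ∈ B ∨ u ∈ s.take i) ∧ G.Adj u (s[i]'hi) ∧
        ∀ w, G.Adj u w → w ≠ s[i]'hi → (w ∈ B ∨ w ∈ s.take i) := by
  classical
  suffices H : ∀ k (s : List V), s.Nodup → (∀ v ∈ s, v ∉ B) →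
      (∀ (i : ℕ) (hi : i < s.length), ∃ u, (u ∈ B ∨ u ∈ s.take i) ∧ G.Adj u (s[i]'hi) ∧
        ∀ w, G.Adj u w → w ≠ s[i]'hi → (w ∈ B ∨ w ∈ s.take i)) →
      (Finset.univ.filter fun v => v ∉ B ∧ v ∉ s).card ≤ k →
      ∃ d : List V, d.Nodup ∧ (∀ v ∈ d, v ∉ B) ∧ (∀ v : V, v ∈ B ∨ v ∈ d) ∧
        ∀ (i : ℕ) (hi : i < d.length), ∃ u, (u ∈ B ∨ u ∈ d.take i) ∧ G.Adj u (d[i]'hi) ∧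
          ∀ w, G.Adj u w → w ≠ d[i]'hi → (w ∈ B ∨ w ∈ d.take i) by
    refine H (Fintype.card V) [] (by simp) (by simp) (by simp) (Finset.card_le_univ _ |>.trans ?_)
    simp
  intro k
  induction k with
  | zero =>
    intro s hnd hdisj hsteps hcard
    refine ⟨s, hnd, hdisj, fun v => ?_, hsteps⟩
    by_contra hv
    push_neg at hv
    have hmem : v ∈ Finset.univ.filter fun v => v ∉ B ∧ v ∉ s := by
      simp [hv.1, hv.2]
    have := Finset.card_pos.2 ⟨v, hmem⟩
    omega
  | succ k ih =>
    intro s hnd hdisj hsteps hcard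
    by_cases hcover : ∀ v : V, v ∈ B ∨ v ∈ s
    · exact ⟨s, hnd, hdisj, hcover, hsteps⟩
    · push_neg at hcover
      obtain ⟨v0, hv0B, hv0c⟩ := hcover
      -- there exists an available forcing move
      have key : ∃ u v, (u ∈ B ∨ u ∈ s) ∧ ¬(v ∈ B ∨ v ∈ s) ∧ G.Adj u v ∧
          ∀ w, G.Adj u w → w ≠ v → (w ∈ B ∨ w ∈ s) := by
        by_contra hno
        push_neg at hno
        have hall : ∀ x : V, Forces G ↑B x → (x ∈ B ∨ x ∈ s) := by
          intro x hx
          induction hx with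
          | init v hv => exact Or.inl hv
          | force u v hadj hu hw ihu ihw =>
            by_cases hv : v ∈ B ∨ v ∈ s
            · exact hv
            · rw [not_or] at hv
              obtain ⟨w, hw1, hw2, hw3⟩ := hno u v ihu hv hadj
              rcases ihw w hw1 hw2 with h' | h'
              · exact (hw3.1 h').elim
              · exact (hw3.2 h').elim
        rcases hall v0 (hB v0) with h' | h'
        · exact hv0B h'
        · exact hv0c h'
      obtain ⟨u, v, hu, hv, hadj, hws⟩ := key
      have hvB : v ∉ B := fun hh => hv (Or.inl hh)
      have hvc : v ∉ s := fun hh => hv (Or.inr hh)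
      have hnd' : (s ++ [v]).Nodup := by
        simp [List.nodup_append, hnd, hvc]
        intro a ha hav; exact hvc (hav ▸ ha)
      have hdisj' : ∀ x ∈ s ++ [v], x ∉ B := by
        intro x hx
        rcases List.mem_append.1 hx with hx | hx
        · exact hdisj x hx
        · simp at hx; subst hx; exact hvB
      have hsteps' : ∀ (i : ℕ) (hi : i < (s ++ [v]).length),
          ∃ u', (u' ∈ B ∨ u' ∈ (s ++ [v]).take i) ∧ G.Adj u' ((s ++ [v])[i]'hi) ∧
            ∀ w, G.Adj u' w → w ≠ (s ++ [v])[i]'hi → (w ∈ B ∨ w ∈ (s ++ [v]).take i) := by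
        intro i hi
        by_cases hic : i < s.length
        · obtain ⟨u', hu'1, hu'2, hu'3⟩ := hsteps i hic
          have htake : (s ++ [v]).take i = s.take i :=
            List.take_append_of_le_length (le_of_lt hic)
          have hget : (s ++ [v])[i]'hi = s[i]'hic := List.getElem_append_left hic
          rw [htake, hget]
          exact ⟨u', hu'1, hu'2, hu'3⟩
        · have hieq : i = s.length := by
            have := hi; simp at this; omega
          have hget : (s ++ [v])[i]'hi = v := by subst hieq; simp
          have htake : (s ++ [v]).take i = s := by
            subst hieq; exact List.take_left
          rw [hget, htake]
          exact ⟨u, hu, hadj, fun w hw1 hw2 => hws w hw1 hw2⟩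
      have hsub : (Finset.univ.filter fun x => x ∉ B ∧ x ∉ s ++ [v]) ⊂
          (Finset.univ.filter fun x => x ∉ B ∧ x ∉ s) := by
        constructor
        · intro x hx
          simp only [Finset.mem_filter, Finset.mem_univ, true_and, List.mem_append] at hx ⊢
          exact ⟨hx.1, fun hh => hx.2 (Or.inl hh)⟩
        · intro hsub'
          have hvold : v ∈ Finset.univ.filter fun x => x ∉ B ∧ x ∉ s := by
            simp [hvB, hvc]
          have := hsub' hvold
          simp at this
      have hcard' : (Finset.univ.filter fun x => x ∉ B ∧ x ∉ s ++ [v]).card ≤ k := by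
        have := Finset.card_lt_card hsub
        omega
      obtain ⟨d, h1, h2, h3, h4⟩ := ih (s ++ [v]) hnd' hdisj' hsteps' hcard'
      exact ⟨d, h1, h2, h3, h4⟩

end Chain
section MainLemmas

variable {V : Type} [Fintype V] (G : SimpleGraph V)

lemma exists_forcing_of_grundy {l : List V} (hl : IsZGrundySeq G l) :
    ∃ B : Finset V, B.card = Fintype.card V - l.length ∧ IsZeroForcingSet G ↑B := by
  classical
  obtain ⟨hleg, hdom⟩ := (isZGrundySeq_iff G l).1 hl
  choose f hf1 hf2 using hleg
  set F : Fin l.length → V := fun i => f i i.isLt with hF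
  have hF1 : ∀ i : Fin l.length, G.Adj (l[(i : ℕ)]'i.isLt) (F i) := fun i => hf1 _ i.isLt
  have hF2 : ∀ i j : Fin l.length, (j : ℕ) < (i : ℕ) →
      F i ∉ closedNbhd G (l[(j : ℕ)]'j.isLt) := fun i j hj => hf2 _ i.isLt _ hj
  have hinj : Function.Injective F := by
    intro i j hij
    by_contra hne
    have hne' : (i : ℕ) ≠ (j : ℕ) := fun hh => hne (Fin.ext hh)
    have hmem1 : F i ∈ closedNbhd G (l[(i : ℕ)]'i.isLt) :=
      (mem_closedNbhd G).2 (Or.inl (hF1 i))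
    have hmem2 : F j ∈ closedNbhd G (l[(j : ℕ)]'j.isLt) :=
      (mem_closedNbhd G).2 (Or.inl (hF1 j))
    rcases hne'.lt_or_gt with hlt | hlt
    · exact hF2 j i hlt (hij ▸ hmem1)
    · exact hF2 i j hlt (hij ▸ hmem2)
  refine ⟨(Finset.univ.image F)ᶜ, ?_, ?_⟩
  · rw [Finset.card_compl, Finset.card_image_of_injective _ hinj]
    simp
  · set B := ((Finset.univ.image F)ᶜ : Finset V) with hB
    have hmem : ∀ v : V, v ∈ B ∨ ∃ i : Fin l.length, F i = v := by
      intro v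
      by_cases hv : v ∈ B
      · exact Or.inl hv
      · right
        rw [hB, Finset.mem_compl, not_not] at hv
        obtain ⟨i, _, hi⟩ := Finset.mem_image.1 hv
        exact ⟨i, hi⟩
    have main : ∀ (n : ℕ), ∀ i : Fin l.length, (i : ℕ) = n → Forces G ↑B (F i) := by
      intro n
      induction n using Nat.strong_induction_on with
      | _ n IH =>
      rintro i rfl
      have hforce_of : ∀ x, x ∈ closedNbhd G (l[(i : ℕ)]'i.isLt) → x ≠ F i →
          Forces G ↑B x := by
        intro x hx hne
        rcases hmem x with hxB | ⟨j, hj⟩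
        · exact Forces.init x (Finset.mem_coe.2 hxB)
        · have hji : (j : ℕ) < (i : ℕ) := by
            rcases lt_trichotomy (j : ℕ) (i : ℕ) with h' | h' | h'
            · exact h'
            · exact absurd (hj.symm.trans (congrArg F (Fin.ext h'))) hne
            · exact absurd (hj ▸ hx) (hF2 j i h')
          exact hj ▸ IH (j : ℕ) hji j rfl
      have hadj : G.Adj (l[(i : ℕ)]'i.isLt) (F i) := hf1 (i : ℕ) i.isLt
      refine Forces.force _ _ hadj ?_ ?_
      · exact hforce_of _ ((mem_closedNbhd G).2 (Or.inr rfl)) hadj.ne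
      · intro w hw hne
        exact hforce_of w ((mem_closedNbhd G).2 (Or.inl hw)) hne
    intro v
    rcases hmem v with hvB | ⟨i, hi⟩
    · exact Forces.init v (Finset.mem_coe.2 hvB)
    · exact hi ▸ main (i : ℕ) i rfl

lemma exists_legal_of_forcing (B : Finset V) (hB : IsZeroForcingSet G ↑B) :
    ∃ l : List V, LegalSeq G l ∧ l.length = Fintype.card V - B.card ∧
      B.card ≤ Fintype.card V := by
  classical
  obtain ⟨s, hnd, hdisj, hcover, hsteps⟩ := exists_chain G B hB
  choose u hu1 hu2 hu3 using hsteps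
  have hcardeq : Fintype.card V = B.card + s.length := by
    have hunion : B ∪ s.toFinset = Finset.univ := by
      apply Finset.eq_univ_iff_forall.2
      intro v
      rcases hcover v with h' | h'
      · exact Finset.mem_union.2 (Or.inl h')
      · exact Finset.mem_union.2 (Or.inr (List.mem_toFinset.2 h'))
    have hdisj2 : Disjoint B s.toFinset := by
      rw [Finset.disjoint_left]
      intro a ha ha2
      exact hdisj a (List.mem_toFinset.1 ha2) ha
    rw [← Finset.card_univ, ← hunion, Finset.card_union_of_disjoint hdisj2,
      List.toFinset_card_of_nodup hnd]
  refine ⟨List.ofFn (fun i : Fin s.length => u (i : ℕ) i.isLt), ?_, ?_⟩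
  · intro i hi
    have his : i < s.length := by
      rwa [List.length_ofFn] at hi
    refine ⟨s[i]'his, ?_, ?_⟩
    · have hgi : (List.ofFn fun i : Fin s.length => u (i : ℕ) i.isLt)[i]'hi = u i his := by
        simp [List.getElem_ofFn]
      rw [hgi]
      exact hu2 i his
    · intro j hj hmemc
      have hjs : j < s.length := hj.trans his
      have hgetj : (List.ofFn fun i : Fin s.length => u (i : ℕ) i.isLt)[j]'(hj.trans hi)
          = u j hjs := by
        simp [List.getElem_ofFn]
      rw [hgetj] at hmemc
      have hsiB : s[i]'his ∉ B := hdisj _ (List.getElem_mem _)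
      have hsitake : s[i]'his ∉ s.take j :=
        getElem_not_mem_take_of_nodup hnd his (le_of_lt hj)
      rcases (mem_closedNbhd G).1 hmemc with hadj | heq
      · have hne : s[i]'his ≠ s[j]'hjs := by
          intro hh
          have := (List.Nodup.getElem_inj_iff hnd).1 hh
          omega
        rcases hu3 j hjs _ hadj hne with h' | h'
        · exact hsiB h'
        · exact hsitake h'
      · rcases hu1 j hjs with h' | h'
        · exact hsiB (heq ▸ h')
        · exact hsitake (heq ▸ h')
  · rw [List.length_ofFn]
    omega

end MainLemmas
/-- Z(G) = |V| − γ_gr^Z(G) for graphs without isolated vertices. -/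
theorem zeroForcing_eq_card_sub_zGrundy {V : Type} [Fintype V] (G : SimpleGraph V)
    (h : ∀ v : V, ∃ w : V, G.Adj v w) :
    zeroForcingNumber G = Fintype.card V - zGrundyNumber G := by
  classical
  set n := Fintype.card V with hn
  -- the zero forcing number is attained
  have hZne : {m | ∃ B : Finset V, B.card = m ∧ IsZeroForcingSet G ↑B}.Nonempty :=
    ⟨(Finset.univ : Finset V).card, Finset.univ, rfl, fun v => Forces.init v (by simp)⟩
  have hZmem : ∃ B : Finset V, B.card = zeroForcingNumber G ∧ IsZeroForcingSet G ↑B :=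
    Nat.sInf_mem hZne
  obtain ⟨B, hBcard, hBforce⟩ := hZmem
  -- the Z-Grundy number is attained
  have hbdd : ∀ m ∈ {m | ∃ l : List V, IsZGrundySeq G l ∧ l.length = m}, m ≤ n := by
    rintro m ⟨l, hl, rfl⟩
    exact legalSeq_length_le G ((isZGrundySeq_iff G l).1 hl).1
  have hbdd' : BddAbove {m | ∃ l : List V, IsZGrundySeq G l ∧ l.length = m} :=
    ⟨n, fun m hm => hbdd m hm⟩
  have hGne : {m | ∃ l : List V, IsZGrundySeq G l ∧ l.length = m}.Nonempty := by
    have hnil : LegalSeq G ([] : List V) := by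
      intro i hi
      simp at hi
    obtain ⟨m, hm, _⟩ := legalSeq_extend G h [] hnil
    exact ⟨m.length, m, hm, rfl⟩
  have hGmem : ∃ l : List V, IsZGrundySeq G l ∧ l.length = zGrundyNumber G :=
    Nat.sSup_mem hGne hbdd'
  obtain ⟨g, hg, hglen⟩ := hGmem
  -- Z ≤ n - γ
  obtain ⟨B', hB'card, hB'force⟩ := exists_forcing_of_grundy G hg
  have hZle : zeroForcingNumber G ≤ n - zGrundyNumber G :=
    Nat.sInf_le ⟨B', by rw [hB'card, hglen], hB'force⟩
  -- n - Z ≤ γ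
  obtain ⟨l, hleg, hlen, hBn⟩ := exists_legal_of_forcing G B hBforce
  obtain ⟨m, hm, hmlen⟩ := legalSeq_extend G h l hleg
  have h1 : m.length ≤ zGrundyNumber G := le_csSup hbdd' ⟨m, hm, rfl⟩
  have hγle : zGrundyNumber G ≤ n := by rw [← hglen]; exact hbdd _ ⟨g, hg, rfl⟩
  omega

end ZFPaper
end

section
/- Let q ≥ 3 be an odd integer, and define B_n = Σ_{i=1}^n I^{⊗(i−1)} ⊗ J ⊗ I^{⊗(n−i)} over F_2, where I, J are the q × q identity and all-ones matrices. Then the nullity of B_n over F_2 is at least (q^n + (q−2)^n)/2. -/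
open Finset

namespace ZFPaper

variable {V : Type*}

/-- The matrix B_n = Σᵢ I^{⊗(i−1)} ⊗ J ⊗ I^{⊗(n−i)} over F₂, written entrywise: its
(x,y) entry is Σᵢ Πⱼ≠ᵢ δ_{xⱼ,yⱼ} (the J-factor contributes 1 in every entry). -/
def hammingMatrix (n q : ℕ) : Matrix (Fin n → Fin q) (Fin n → Fin q) (ZMod 2) :=
  fun x y => ∑ i : Fin n, ∏ j ∈ Finset.univ.erase i, (if x j = y j then 1 else 0)


section HammingAux

open Finset

variable (q : ℕ)

/-- Rows: row 0 is the all-ones vector, row `a ≠ 0` is the indicator of `{0, a}`. -/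
def Pm [NeZero q] : Matrix (Fin q) (Fin q) (ZMod 2) :=
  fun a x => if a = 0 ∨ x = a ∨ x = 0 then 1 else 0

/-- Explicit right inverse of `Pm`. -/
def Qm [NeZero q] : Matrix (Fin q) (Fin q) (ZMod 2) :=
  fun a c => if a = 0 ∨ c ≠ a then 1 else 0

lemma Pm_zero [NeZero q] (x : Fin q) : Pm q 0 x = 1 := by simp [Pm]

lemma Pm_ne [NeZero q] {a : Fin q} (ha : a ≠ 0) (t : Fin q) :
    Pm q a t = (if t = a then 1 else 0) + (if t = 0 then 1 else 0) := by
  rcases eq_or_ne t a with rfl | h1 <;> rcases eq_or_ne t 0 with rfl | h2 <;>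
    simp_all [Pm]

lemma Qm_expand [NeZero q] (t c : Fin q) :
    Qm q t c = 1 + (if c = t ∧ t ≠ 0 then 1 else 0) := by
  by_cases h1 : t = 0
  · subst h1; simp [Qm]
  · by_cases h2 : c = t
    · subst h2; simp [Qm, h1]; decide
    · simp [Qm, h1, h2]

lemma natCast_odd (hqo : Odd q) : ((q : ℕ) : ZMod 2) = 1 := by
  have h := Nat.odd_iff.mp hqo
  rw [← ZMod.natCast_mod q 2, h]; rfl

lemma sum_Pm [NeZero q] (hqo : Odd q) (a : Fin q) :
    ∑ t, Pm q a t = if a = 0 then 1 else 0 := by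
  rcases eq_or_ne a 0 with rfl | ha
  · simp only [Pm_zero, if_pos rfl, Finset.sum_const, card_univ, Fintype.card_fin, nsmul_eq_mul,
      mul_one]
    exact natCast_odd q hqo
  · simp only [Pm_ne q ha, if_neg ha, Finset.sum_add_distrib]
    rw [Finset.sum_ite_eq' univ a (fun _ => (1 : ZMod 2)),
      Finset.sum_ite_eq' univ 0 (fun _ => (1 : ZMod 2))]
    simp only [mem_univ, if_pos]
    decide

lemma Pm_mul_Qm [NeZero q] (hqo : Odd q) : Pm q * Qm q = 1 := by
  ext a c
  rw [Matrix.mul_apply, Matrix.one_apply]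
  rcases eq_or_ne a 0 with rfl | ha
  · simp only [Pm_zero, one_mul]
    simp_rw [fun t => Qm_expand q t c, Finset.sum_add_distrib]
    have h1 : (∑ _t : Fin q, (1 : ZMod 2)) = 1 := by
      simp only [Finset.sum_const, card_univ, Fintype.card_fin, nsmul_eq_mul, mul_one]
      exact natCast_odd q hqo
    rw [h1]
    have h2 : (∑ t : Fin q, if c = t ∧ t ≠ 0 then (1:ZMod 2) else 0)
        = if c ≠ 0 then 1 else 0 := by
      rcases eq_or_ne c 0 with rfl | hc
      · rw [if_neg (by simp)]
        apply Finset.sum_eq_zero; intro t _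
        rw [if_neg]; rintro ⟨ha1, ha2⟩; exact ha2 ha1.symm
      · rw [if_pos hc, Finset.sum_eq_single c]
        · simp [hc]
        · intro b _ hb; rw [if_neg]; rintro ⟨h, -⟩; exact hb h.symm
        · simp
    rw [h2]
    rcases eq_or_ne c 0 with rfl | hc
    · simp
    · rw [if_pos hc, if_neg (Ne.symm hc)]; decide
  · simp_rw [Pm_ne q ha, add_mul, Finset.sum_add_distrib, ite_mul, one_mul, zero_mul]
    rw [Finset.sum_ite_eq' univ a (fun t => Qm q t c),
      Finset.sum_ite_eq' univ 0 (fun t => Qm q t c)]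
    simp only [mem_univ, if_pos]
    rcases eq_or_ne a c with rfl | hc
    · rw [if_pos rfl]; simp [Qm, ha, Ne.symm ha]
    · rw [if_neg hc]; simp [Qm, ha, hc, Ne.symm hc]; decide

variable (n : ℕ)

/-- The `n`-fold Kronecker power of `Pm`. -/
def Mm [NeZero q] : Matrix (Fin n → Fin q) (Fin n → Fin q) (ZMod 2) :=
  fun g x => ∏ i, Pm q (g i) (x i)

/-- The `n`-fold Kronecker power of `Qm`. -/
def Nm [NeZero q] : Matrix (Fin n → Fin q) (Fin n → Fin q) (ZMod 2) :=
  fun x h => ∏ i, Qm q (x i) (h i)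

lemma Mm_mul_Nm [NeZero q] (hqo : Odd q) : Mm q n * Nm q n = 1 := by
  ext g h
  rw [Matrix.mul_apply, Matrix.one_apply]
  have key : ∀ x : Fin n → Fin q, Mm q n g x * Nm q n x h
      = ∏ i, (Pm q (g i) (x i) * Qm q (x i) (h i)) := by
    intro x; rw [Mm, Nm]; exact (Finset.prod_mul_distrib).symm
  simp_rw [key]
  rw [← Fintype.prod_sum (fun i t => Pm q (g i) t * Qm q t (h i))]
  have : ∀ i : Fin n, (∑ t, Pm q (g i) t * Qm q t (h i))
      = (1 : Matrix (Fin q) (Fin q) (ZMod 2)) (g i) (h i) := by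
    intro i; rw [← Matrix.mul_apply, Pm_mul_Qm q hqo]
  simp_rw [this, Matrix.one_apply]
  by_cases hgh : g = h
  · subst hgh; simp
  · rw [if_neg hgh]
    obtain ⟨i, hi⟩ : ∃ i, g i ≠ h i := by
      by_contra hh; push_neg at hh; exact hgh (funext hh)
    exact Finset.prod_eq_zero (Finset.mem_univ i) (if_neg hi)

lemma Mm_rows_li [NeZero q] (hqo : Odd q) :
    LinearIndependent (ZMod 2) (fun g => Mm q n g) := by
  haveI : Invertible (Mm q n) := invertibleOfRightInverse _ _ (Mm_mul_Nm q n hqo)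
  exact Matrix.linearIndependent_rows_of_invertible (Mm q n)

lemma mem_ker_aux [NeZero q] (hqo : Odd q) (g : Fin n → Fin q)
    (hg : Even (univ.filter (fun i => g i = 0)).card) :
    (hammingMatrix n q).mulVec (Mm q n g) = 0 := by
  funext x
  simp only [Matrix.mulVec, dotProduct, hammingMatrix, Pi.zero_apply]
  simp_rw [Finset.sum_mul]
  rw [Finset.sum_comm]
  have step1 : ∀ i : Fin n,
      (∑ y : Fin n → Fin q, (∏ j ∈ univ.erase i, if x j = y j then (1:ZMod 2) else 0) * Mm q n g y)
      = (if g i = 0 then 1 else 0) * ∏ j ∈ univ.erase i, Pm q (g j) (x j) := by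
    intro i
    have key : ∀ y : Fin n → Fin q,
        (∏ j ∈ univ.erase i, if x j = y j then (1:ZMod 2) else 0) * Mm q n g y
        = ∏ j, ((if j = i then 1 else if x j = y j then 1 else 0) * Pm q (g j) (y j)) := by
      intro y
      rw [Finset.prod_mul_distrib, Mm]
      congr 1
      rw [← Finset.mul_prod_erase univ _ (Finset.mem_univ i), if_pos rfl, one_mul]
      exact Finset.prod_congr rfl fun j hj => by rw [if_neg (Finset.mem_erase.mp hj).1]
    simp_rw [key]
    rw [← Fintype.prod_sum
      (fun j t => (if j = i then 1 else if x j = t then 1 else 0) * Pm q (g j) t)]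
    rw [← Finset.mul_prod_erase univ _ (Finset.mem_univ i)]
    congr 1
    · simpa using sum_Pm q hqo (g i)
    · refine Finset.prod_congr rfl fun j hj => ?_
      simp_rw [if_neg (Finset.mem_erase.mp hj).1, ite_mul, one_mul, zero_mul]
      exact Finset.sum_ite_eq univ (x j) (fun t => Pm q (g j) t) |>.trans (by simp)
  simp_rw [step1, ite_mul, one_mul, zero_mul]
  rw [← Finset.sum_filter]
  have step2 : ∀ i ∈ univ.filter (fun i => g i = 0),
      (∏ j ∈ univ.erase i, Pm q (g j) (x j)) = Mm q n g x := by
    intro i hi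
    rw [Mm, ← Finset.mul_prod_erase univ _ (Finset.mem_univ i),
      (Finset.mem_filter.mp hi).2, Pm_zero, one_mul]
  rw [Finset.sum_congr rfl step2, Finset.sum_const, nsmul_eq_mul]
  have : (((univ.filter (fun i => g i = 0)).card : ℕ) : ZMod 2) = 0 := by
    rw [← ZMod.natCast_mod, Nat.even_iff.mp hg]; rfl
  rw [this, zero_mul]

lemma count_even [NeZero q] (hq : 3 ≤ q) :
    (univ.filter fun g : Fin n → Fin q =>
      Even (univ.filter fun i => g i = 0).card).card = (q ^ n + (q - 2) ^ n) / 2 := by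
  set z : (Fin n → Fin q) → ℕ := fun g => (univ.filter fun i => g i = 0).card with hz
  set E := (univ.filter fun g : Fin n → Fin q => Even (z g)).card with hE
  set O := (univ.filter fun g : Fin n → Fin q => ¬ Even (z g)).card with hO
  have htot : E + O = q ^ n := by
    rw [hE, hO, Finset.card_filter_add_card_filter_not, Finset.card_univ]
    simp [Fintype.card_fun]
  have hsum : ∑ g : Fin n → Fin q, ((-1:ℤ) ^ (z g)) = ((q:ℤ) - 2) ^ n := by
    have h1 : ∀ g : Fin n → Fin q,
        ((-1:ℤ) ^ (z g)) = ∏ i, (if g i = 0 then (-1:ℤ) else 1) := by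
      intro g
      rw [← Finset.prod_filter_mul_prod_filter_not univ (fun i => g i = 0)]
      rw [Finset.prod_congr rfl (fun i hi => if_pos (Finset.mem_filter.mp hi).2),
        Finset.prod_const,
        Finset.prod_congr rfl (fun i hi => if_neg (Finset.mem_filter.mp hi).2),
        Finset.prod_const, one_pow, mul_one]
    simp_rw [h1]
    rw [← Fintype.prod_sum (fun (_ : Fin n) (t : Fin q) => if t = 0 then (-1:ℤ) else 1)]
    have h2 : (∑ t : Fin q, if t = 0 then (-1:ℤ) else 1) = (q:ℤ) - 2 := by
      have h3 : ∀ t : Fin q, (if t = 0 then (-1:ℤ) else 1)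
          = 1 + (if t = 0 then (-2:ℤ) else 0) := by
        intro t; by_cases h : t = 0 <;> simp [h]
      simp_rw [h3]
      rw [Finset.sum_add_distrib, Finset.sum_const,
        Finset.sum_ite_eq' univ (0 : Fin q) (fun _ => (-2:ℤ))]
      simp [card_univ]; ring
    rw [Finset.prod_congr rfl (fun i _ => h2), Finset.prod_const, card_univ, Fintype.card_fin]
  rw [← Finset.sum_filter_add_sum_filter_not univ (fun g => Even (z g))] at hsum
  have he : ∑ g ∈ univ.filter (fun g : Fin n → Fin q => Even (z g)), ((-1:ℤ) ^ (z g)) = E := by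
    rw [Finset.sum_congr rfl (fun g hg => Even.neg_one_pow (Finset.mem_filter.mp hg).2),
      Finset.sum_const, hE]; simp
  have ho : ∑ g ∈ univ.filter (fun g : Fin n → Fin q => ¬ Even (z g)), ((-1:ℤ) ^ (z g)) = -O := by
    rw [Finset.sum_congr rfl
      (fun g hg => Odd.neg_one_pow (Nat.not_even_iff_odd.mp (Finset.mem_filter.mp hg).2)),
      Finset.sum_const, hO]; simp
  rw [he, ho] at hsum
  have hcast : ((q:ℤ) - 2) ^ n = ((q - 2 : ℕ) ^ n : ℕ) := by
    push_cast [Nat.cast_sub (by omega : 2 ≤ q)]; ring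
  rw [hcast] at hsum
  have : E = O + (q - 2) ^ n := by omega
  omega

end HammingAux

/-- for q odd, the nullity of B_n over F₂ is at least (q^n + (q−2)^n)/2. -/
theorem hammingMatrix_odd (n q : ℕ) (hq : 3 ≤ q) (hqo : Odd q) :
    (q ^ n + (q - 2) ^ n) / 2 ≤
      Module.finrank (ZMod 2) ↥(LinearMap.ker (Matrix.toLin' (hammingMatrix n q))) := by
  haveI : NeZero q := ⟨by omega⟩
  classical
  set s : Finset (Fin n → Fin q) :=
    Finset.univ.filter (fun g => Even (Finset.univ.filter fun i => g i = 0).card) with hs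
  have hker : ∀ g : s, Mm q n (g : Fin n → Fin q)
      ∈ LinearMap.ker (Matrix.toLin' (hammingMatrix n q)) := by
    intro g
    rw [LinearMap.mem_ker, Matrix.toLin'_apply]
    exact mem_ker_aux q n hqo _ (Finset.mem_filter.mp g.2).2
  let v : s → ↥(LinearMap.ker (Matrix.toLin' (hammingMatrix n q))) :=
    fun g => ⟨Mm q n (g : Fin n → Fin q), hker g⟩
  have hli : LinearIndependent (ZMod 2) v := by
    apply LinearIndependent.of_comp (LinearMap.ker (Matrix.toLin' (hammingMatrix n q))).subtype
    exact (Mm_rows_li q n hqo).comp (Subtype.val : s → (Fin n → Fin q)) Subtype.val_injective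
  have hcard := hli.fintype_card_le_finrank
  rw [Fintype.card_coe, hs, count_even q n hq] at hcard
  exact hcard


end ZFPaper
end
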